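/- Let P be an ergodic row-stochastic matrix on a finite set D reversible with respect to a positive probability distribution π, with second largest eigenvalue β₁. For the Markov chain started in π, the worst-case mean squared error over {f : ‖f‖₂ ≤ 1} of S_n(f) = (1/n)∑_{i=1}^n f(X_i) equals (1+β₁)/(n(1−β₁)) − 2β₁(1−β₁^n)/(n²(1−β₁)²), and this is bounded above by 2/(n(1−β₁)). -/

import Mathlib

/-!
Write `g = f - S(f)` and expand it in the orthonormal eigenbasis, `g = ∑ₖ aₖ uₖ` with `a₀ = 0`.
For the stationary chain `E[g(Xᵢ) g(Xⱼ)] = ⟨g, P^|i-j| g⟩_π = ∑ₖ aₖ² βₖ^|i-j|`, so the mean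
squared error of `Sₙ(f)` is `n⁻² ∑ₖ aₖ² Hₙ(βₖ)` with `Hₙ(z) = ∑_{i,j<n} z^|i-j|` (`distPowSum`).
On `[-1, 1]` the polynomial `Hₙ` is nondecreasing, so under `∑ₖ aₖ² ≤ ‖f‖₂² ≤ 1` the error is at
most `Hₙ(β₁)/n²`, with equality at `f = u₁`; the closed form and the bound `2n/(1-β₁)` come from
`(1-z)² Hₙ(z) = n(1-z²) - 2z(1-zⁿ)`.
-/

open Finset Matrix

/-- The weighted `l₂(D,π)` norm. -/
noncomputable def norm2 {D : Type*} [Fintype D] (π : D → ℝ) (f : D → ℝ) : ℝ :=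
  Real.sqrt (∑ x, f x ^ 2 * π x)

section DistPowSum

noncomputable def distPowSum (n : ℕ) (z : ℝ) : ℝ :=
  ∑ i ∈ range n, ∑ j ∈ range n, z ^ Nat.dist i j

theorem distPowSum_eq_sum_fin (n : ℕ) (z : ℝ) :
    distPowSum n z = ∑ i : Fin n, ∑ j : Fin n, z ^ Nat.dist i j := by
  rw [distPowSum, ← Fin.sum_univ_eq_sum_range]
  exact sum_congr rfl fun i _ => (Fin.sum_univ_eq_sum_range (fun j => z ^ Nat.dist i j) n).symm

theorem distPowSum_succ (n : ℕ) (z : ℝ) :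
    distPowSum (n + 1) z = distPowSum n z + 2 * ∑ i ∈ range (n + 1), z ^ i - 1 := by
  have hdist : ∑ i ∈ range n, z ^ Nat.dist i n = ∑ i ∈ range n, z ^ (i + 1) := by
    rw [← sum_range_reflect]
    refine sum_congr rfl fun i hi => ?_
    rw [Nat.dist_eq_sub_of_le (by omega)]
    congr 1
    have := mem_range.1 hi
    omega
  rw [sum_range_succ' (fun i => z ^ i)]
  simp only [distPowSum, sum_range_succ, sum_add_distrib, Nat.dist_self, pow_zero,
    Nat.dist_comm n, hdist]
  ring

theorem distPowSum_eq_sum_geom_sum (n : ℕ) (z : ℝ) :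
    distPowSum n z = 2 * ∑ k ∈ range (n + 1), ∑ i ∈ range k, z ^ i - n := by
  induction n with
  | zero => simp [distPowSum]
  | succ n ih =>
    rw [distPowSum_succ, ih, sum_range_succ _ (n + 1)]
    push_cast
    ring

theorem one_sub_sq_mul_distPowSum (n : ℕ) (z : ℝ) :
    (1 - z) ^ 2 * distPowSum n z = n * (1 - z ^ 2) - 2 * z * (1 - z ^ n) := by
  induction n with
  | zero => simp [distPowSum]
  | succ n ih =>
    rw [distPowSum_succ]
    push_cast
    linear_combination ih + 2 * (1 - z) * mul_neg_geom_sum z (n + 1)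

theorem sub_mul_sum_antidiagonal_geom_sum_mul_pow (x y : ℝ) (n : ℕ) :
    (y - x) * ∑ p ∈ antidiagonal n, (∑ i ∈ range p.1, y ^ i) * x ^ p.2
      = ∑ i ∈ range (n + 1), y ^ i - ∑ i ∈ range (n + 1), x ^ i := by
  induction n with
  | zero => simp
  | succ n ih =>
    rw [Nat.sum_antidiagonal_succ', geom_sum_succ (x := y) (n := n + 1),
      geom_sum_succ (x := x) (n := n + 1)]
    simp only [pow_zero, mul_one, pow_succ, ← mul_assoc]
    rw [← sum_mul]
    linear_combination x * ih

theorem sum_range_sub_geom_sum (x y : ℝ) (n : ℕ) :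
    ∑ k ∈ range (n + 1), (∑ i ∈ range k, y ^ i - ∑ i ∈ range k, x ^ i)
      = (y - x) * ∑ p ∈ antidiagonal n, (∑ i ∈ range p.1, y ^ i) * ∑ i ∈ range p.2, x ^ i := by
  induction n with
  | zero => simp
  | succ n ih =>
    rw [sum_range_succ, ih, ← sub_mul_sum_antidiagonal_geom_sum_mul_pow, Nat.sum_antidiagonal_succ']
    simp only [sum_range_zero, mul_zero, zero_add, sum_range_succ, mul_add, sum_add_distrib]

theorem geom_sum_nonneg_of_neg_one_le {x : ℝ} (hx : -1 ≤ x) (n : ℕ) :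
    0 ≤ ∑ i ∈ range n, x ^ i := by
  rcases hx.eq_or_lt with rfl | hx
  · rw [neg_one_geom_sum]
    split_ifs <;> norm_num
  · rcases eq_or_ne n 0 with rfl | hn
    · simp
    · exact (geom_sum_pos' (by linarith) hn).le

/-- `Hₙ(y) - Hₙ(x)` is `2(y - x)` times a convolution of geometric sums, which are nonnegative
as soon as the ratio is `≥ -1`. -/
theorem distPowSum_mono {x y : ℝ} (hx : -1 ≤ x) (hxy : x ≤ y) (n : ℕ) :
    distPowSum n x ≤ distPowSum n y := by
  have h := sum_range_sub_geom_sum x y n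
  rw [sum_sub_distrib] at h
  have hsum : 0 ≤ ∑ p ∈ antidiagonal n, (∑ i ∈ range p.1, y ^ i) * ∑ i ∈ range p.2, x ^ i :=
    sum_nonneg fun p _ => mul_nonneg (geom_sum_nonneg_of_neg_one_le (hx.trans hxy) _)
      (geom_sum_nonneg_of_neg_one_le hx _)
  rw [distPowSum_eq_sum_geom_sum, distPowSum_eq_sum_geom_sum]
  nlinarith [mul_nonneg (sub_nonneg.2 hxy) hsum]

theorem distPowSum_nonneg {z : ℝ} (hz : -1 ≤ z) (n : ℕ) : 0 ≤ distPowSum n z := by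
  rcases le_total 0 z with hz0 | hz0
  · exact sum_nonneg fun i _ => sum_nonneg fun j _ => pow_nonneg hz0 _
  · refine le_trans ?_ (distPowSum_mono le_rfl hz n)
    have h := one_sub_sq_mul_distPowSum n (-1)
    have : (-1 : ℝ) ^ n ≤ 1 := by
      rcases n.even_or_odd with he | ho
      · rw [he.neg_one_pow]
      · rw [ho.neg_one_pow]; norm_num
    nlinarith

theorem distPowSum_le {z : ℝ} (hz : |z| < 1) (n : ℕ) : distPowSum n z ≤ 2 * n / (1 - z) := by
  obtain ⟨hz₁, hz₂⟩ := abs_lt.1 hz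
  rw [le_div_iff₀ (by linarith)]
  have h := one_sub_sq_mul_distPowSum n z
  rcases n with _ | n
  · simp [distPowSum]
  · have hpow : (z ^ (n + 1)) ^ 2 ≤ 1 := by
      rw [sq_le_one_iff_abs_le_one, abs_pow]
      exact pow_le_one₀ (abs_nonneg z) hz.le
    have : 0 ≤ ((n + 1 : ℕ) : ℝ) * (1 - z) ^ 2 + 2 * z * (1 - z ^ (n + 1)) := by
      push_cast
      nlinarith [mul_nonneg (n.cast_nonneg (α := ℝ)) (sq_nonneg (1 - z)),
        sq_nonneg (z - z ^ (n + 1))]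
    nlinarith

theorem distPowSum_div_sq {z : ℝ} (hz : z ≠ 1) {n : ℕ} (hn : n ≠ 0) :
    distPowSum n z / (n : ℝ) ^ 2
      = (1 + z) / (n * (1 - z)) - 2 * z * (1 - z ^ n) / ((n : ℝ) ^ 2 * (1 - z) ^ 2) := by
  have h1z : 1 - z ≠ 0 := sub_ne_zero.2 hz.symm
  have h := one_sub_sq_mul_distPowSum n z
  field_simp
  linear_combination h

end DistPowSum

section PathWeight

variable {D : Type*} (P : Matrix D D ℝ)

def pathWeight (μ : D → ℝ) (m : ℕ) (ω : Fin (m + 1) → D) : ℝ :=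
  μ (ω 0) * ∏ i : Fin m, P (ω i.castSucc) (ω i.succ)

theorem pathWeight_cons (μ : D → ℝ) (m : ℕ) (x : D) (ω : Fin (m + 1) → D) :
    pathWeight P μ (m + 1) (Fin.cons x ω) = μ x * pathWeight P (P x) m ω := by
  simp [pathWeight, Fin.prod_univ_succ]

variable [Fintype D]

theorem sum_pathWeight_succ (μ : D → ℝ) (m : ℕ) (F : (Fin (m + 2) → D) → ℝ) :
    ∑ ω, pathWeight P μ (m + 1) ω * F ω
      = ∑ x, μ x * ∑ ω, pathWeight P (P x) m ω * F (Fin.cons x ω) := by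
  rw [← (Fin.consEquiv fun _ => D).sum_comp, Fintype.sum_prod_type]
  refine sum_congr rfl fun x _ => ?_
  rw [mul_sum]
  exact sum_congr rfl fun ω _ => by rw [← mul_assoc, ← pathWeight_cons]; rfl

theorem sum_mul_pathWeight (μ : D → ℝ) (m : ℕ) (ω : Fin (m + 1) → D) :
    ∑ x, μ x * pathWeight P (P x) m ω = pathWeight P (μ ᵥ* P) m ω := by
  simp only [pathWeight, vecMul, dotProduct, sum_mul, mul_assoc]

theorem sum_pathWeight (hP : ∀ x, ∑ y, P x y = 1) (μ : D → ℝ) (m : ℕ) :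
    ∑ ω, pathWeight P μ m ω = ∑ x, μ x := by
  induction m generalizing μ with
  | zero =>
    rw [← (Equiv.funUnique (Fin 1) D).symm.sum_comp]
    simp [pathWeight]
  | succ m ih =>
    simpa [ih, hP] using sum_pathWeight_succ P μ m 1

variable [DecidableEq D]

theorem sum_pathWeight_mul_mul (hP : ∀ x, ∑ y, P x y = 1) {m : ℕ} (μ : D → ℝ)
    (i j : Fin (m + 1)) (hij : i ≤ j) (g h : D → ℝ) :
    ∑ ω, pathWeight P μ m ω * (g (ω i) * h (ω j))
      = ∑ x, g x * (P ^ ((j : ℕ) - i) *ᵥ h) x * (μ ᵥ* P ^ (i : ℕ)) x := by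
  induction m generalizing μ g h with
  | zero =>
    obtain rfl : i = 0 := Fin.fin_one_eq_zero i
    obtain rfl : j = 0 := Fin.fin_one_eq_zero j
    rw [← (Equiv.funUnique (Fin 1) D).symm.sum_comp]
    simp [pathWeight, mul_comm]
  | succ m ih =>
    rw [sum_pathWeight_succ]
    induction i using Fin.cases with
    | zero =>
      induction j using Fin.cases with
      | zero =>
        simp_rw [Fin.cons_zero, ← sum_mul, sum_pathWeight P hP]
        simp [mul_comm, hP]
      | succ j =>
        have hrow : ∀ x, ∑ ω, pathWeight P (P x) m ω * h (ω j) = (P ^ ((j : ℕ) + 1) *ᵥ h) x := by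
          intro x
          have := ih (P x) 0 j (Fin.zero_le j) 1 h
          simp only [Pi.one_apply, one_mul, Fin.val_zero, Nat.sub_zero, pow_zero,
            vecMul_one] at this
          rw [this, pow_succ', ← mulVec_mulVec]
          simp [mulVec, dotProduct, mul_comm]
        simp_rw [Fin.cons_zero, Fin.cons_succ, mul_left_comm _ (g _), ← mul_sum, hrow]
        simp [mul_comm]
    | succ i =>
      induction j using Fin.cases with
      | zero => exact absurd hij (not_le.2 (Fin.succ_pos i))
      | succ j =>
        simp_rw [Fin.cons_succ, mul_sum]
        rw [sum_comm]
        have hshift := ih (μ ᵥ* P) i j (Fin.succ_le_succ_iff.1 hij) g h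
        rw [vecMul_vecMul, ← pow_succ'] at hshift
        simp only [Fin.val_succ, Nat.add_sub_add_right]
        rw [← hshift]
        refine sum_congr rfl fun ω _ => ?_
        rw [← sum_mul_pathWeight, sum_mul]
        simp_rw [mul_assoc]

end PathWeight

section WeightedInner

variable {D ι : Type*} [Fintype D]

def weightedInner (π f g : D → ℝ) : ℝ := ∑ x, f x * g x * π x

theorem weightedInner_comm (π f g : D → ℝ) : weightedInner π f g = weightedInner π g f := by
  simp only [weightedInner, mul_comm (f _)]

theorem weightedInner_sum_smul (π f : D → ℝ) (s : Finset ι) (c : ι → ℝ) (v : ι → D → ℝ) :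
    weightedInner π f (∑ k ∈ s, c k • v k) = ∑ k ∈ s, c k * weightedInner π f (v k) := by
  simp only [weightedInner, Finset.sum_apply, Pi.smul_apply, smul_eq_mul, mul_sum, sum_mul]
  rw [sum_comm]
  exact sum_congr rfl fun k _ => sum_congr rfl fun x _ => by ring

variable [Fintype ι] [DecidableEq ι] {π : D → ℝ} {u : ι → D → ℝ}

theorem eq_sum_weightedInner_smul (hcard : Fintype.card ι = Fintype.card D)
    (h_ortho : ∀ k l, weightedInner π (u k) (u l) = if k = l then 1 else 0) (g : D → ℝ) :
    g = ∑ k, weightedInner π g (u k) • u k := by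
  -- orthonormality forces linear independence, and there are `card D` vectors
  have hind : LinearIndependent ℝ u := by
    refine linearIndependent_iff'.2 fun s c hc k hk => ?_
    have := congrArg (weightedInner π (u k)) hc
    rw [weightedInner_sum_smul] at this
    simp only [h_ortho] at this
    simpa [hk, weightedInner] using this
  have hspan := hind.span_eq_top_of_card_eq_finrank' (by simp [hcard])
  obtain ⟨c, rfl⟩ :=
    (Submodule.mem_span_range_iff_exists_fun ℝ).1 (hspan ▸ Submodule.mem_top (x := g))
  congr! 2 with k
  rw [weightedInner_comm, weightedInner_sum_smul]
  simp [h_ortho]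

theorem weightedInner_eq_sum_mul (hcard : Fintype.card ι = Fintype.card D)
    (h_ortho : ∀ k l, weightedInner π (u k) (u l) = if k = l then 1 else 0) (f g : D → ℝ) :
    weightedInner π f g = ∑ k, weightedInner π g (u k) * weightedInner π f (u k) := by
  conv_lhs => rw [eq_sum_weightedInner_smul hcard h_ortho g]
  exact weightedInner_sum_smul π f _ _ u

theorem pow_mulVec_eq_pow_smul [DecidableEq D] {P : Matrix D D ℝ}
    {v : D → ℝ} {β : ℝ} (h : P *ᵥ v = β • v) (d : ℕ) : P ^ d *ᵥ v = β ^ d • v := by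
  induction d with
  | zero => simp
  | succ d ih => rw [pow_succ, ← mulVec_mulVec, h, mulVec_smul, ih, smul_smul, pow_succ']

theorem weightedInner_pow_mulVec [DecidableEq D] (hcard : Fintype.card ι = Fintype.card D)
    (h_ortho : ∀ k l, weightedInner π (u k) (u l) = if k = l then 1 else 0)
    {P : Matrix D D ℝ} {β : ι → ℝ} (h_eig : ∀ k, P *ᵥ u k = β k • u k) (g : D → ℝ) (d : ℕ) :
    weightedInner π g (P ^ d *ᵥ g) = ∑ k, weightedInner π g (u k) ^ 2 * β k ^ d := by
  have h : P ^ d *ᵥ g = ∑ k, (weightedInner π g (u k) * β k ^ d) • u k := by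
    conv_lhs => rw [eq_sum_weightedInner_smul hcard h_ortho g]
    simp [mulVec_sum, mulVec_smul, pow_mulVec_eq_pow_smul (h_eig _), smul_smul]
  rw [h, weightedInner_sum_smul]
  exact sum_congr rfl fun k _ => by ring

end WeightedInner

section MarkovChain

variable {D ι : Type*} [Fintype D] {P : Matrix D D ℝ} {π : D → ℝ}

theorem vecMul_eq_self_of_reversible (hP : ∀ x, ∑ y, P x y = 1)
    (hrev : ∀ x y, π x * P x y = π y * P y x) : π ᵥ* P = π := by
  ext y
  simp [vecMul, dotProduct, hrev _ y, ← mul_sum, hP]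

variable [DecidableEq D]

theorem vecMul_pow_eq_self (h : π ᵥ* P = π) (k : ℕ) : π ᵥ* P ^ k = π := by
  induction k with
  | zero => simp
  | succ k ih => rw [pow_succ, ← vecMul_vecMul, ih, h]

variable [Fintype ι] [DecidableEq ι] {u : ι → D → ℝ} {β : ι → ℝ}

theorem sum_pathWeight_mul_sum_sq (hP : ∀ x, ∑ y, P x y = 1) (hstat : π ᵥ* P = π)
    (hcard : Fintype.card ι = Fintype.card D)
    (h_ortho : ∀ k l, weightedInner π (u k) (u l) = if k = l then 1 else 0)
    (h_eig : ∀ k, P *ᵥ u k = β k • u k) (m : ℕ) (g : D → ℝ) :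
    ∑ ω, pathWeight P π m ω * (∑ i, g (ω i)) ^ 2
      = ∑ k, weightedInner π g (u k) ^ 2 * distPowSum (m + 1) (β k) := by
  have hcov : ∀ i j : Fin (m + 1), ∑ ω, pathWeight P π m ω * (g (ω i) * g (ω j))
      = ∑ k, weightedInner π g (u k) ^ 2 * β k ^ Nat.dist i j := by
    intro i j
    wlog hij : i ≤ j generalizing i j
    · rw [Nat.dist_comm, ← this j i (le_of_not_ge hij)]
      exact sum_congr rfl fun ω _ => by rw [mul_comm (g (ω i))]
    rw [sum_pathWeight_mul_mul P hP π i j hij, vecMul_pow_eq_self hstat, Nat.dist_eq_sub_of_le hij,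
      ← weightedInner_pow_mulVec hcard h_ortho h_eig]
    rfl
  calc ∑ ω, pathWeight P π m ω * (∑ i, g (ω i)) ^ 2
      = ∑ i : Fin (m + 1), ∑ j : Fin (m + 1), ∑ ω, pathWeight P π m ω * (g (ω i) * g (ω j)) := by
        simp_rw [sq, sum_mul_sum, mul_sum]
        rw [sum_comm]
        exact sum_congr rfl fun i _ => sum_comm
    _ = ∑ k, weightedInner π g (u k) ^ 2 * distPowSum (m + 1) (β k) := by
        simp_rw [hcov, distPowSum_eq_sum_fin, mul_sum]
        exact (sum_congr rfl fun i _ => sum_comm).trans sum_comm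

theorem sum_pathWeight_mul_mean_sub_sq (hP : ∀ x, ∑ y, P x y = 1) (hstat : π ᵥ* P = π)
    (hcard : Fintype.card ι = Fintype.card D)
    (h_ortho : ∀ k l, weightedInner π (u k) (u l) = if k = l then 1 else 0)
    (h_eig : ∀ k, P *ᵥ u k = β k • u k) (m : ℕ) (f : D → ℝ) (c : ℝ) :
    ∑ ω, pathWeight P π m ω * ((1 / ((m + 1 : ℕ) : ℝ)) * ∑ i, f (ω i) - c) ^ 2
      = (∑ k, weightedInner π (fun x => f x - c) (u k) ^ 2 * distPowSum (m + 1) (β k))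
          / ((m + 1 : ℕ) : ℝ) ^ 2 := by
  rw [← sum_pathWeight_mul_sum_sq hP hstat hcard h_ortho h_eig, sum_div]
  refine sum_congr rfl fun ω _ => ?_
  rw [sum_sub_distrib, sum_const, card_univ, Fintype.card_fin, nsmul_eq_mul]
  field_simp

end MarkovChain

section Variance

variable {D ι : Type*} [Fintype D] [Fintype ι] [DecidableEq ι] {π : D → ℝ} {u : ι → D → ℝ}

theorem sum_weightedInner_sub_mean_sq_mul_le (hπ : ∑ x, π x = 1)
    (hcard : Fintype.card ι = Fintype.card D)
    (h_ortho : ∀ k l, weightedInner π (u k) (u l) = if k = l then 1 else 0)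
    {k₀ : ι} (hu₀ : u k₀ = fun _ => 1) {c : ι → ℝ} {C : ℝ} (hC : 0 ≤ C)
    (hc : ∀ k ≠ k₀, c k ≤ C) {f : D → ℝ} (hf : ∑ x, f x ^ 2 * π x ≤ 1) :
    ∑ k, weightedInner π (fun x => f x - ∑ y, f y * π y) (u k) ^ 2 * c k ≤ C := by
  set g : D → ℝ := fun x => f x - ∑ y, f y * π y
  have hg₀ : weightedInner π g (u k₀) = 0 := by
    simp [weightedInner, g, hu₀, sub_mul, sum_sub_distrib, ← mul_sum, hπ]
  have hgg : weightedInner π g g ≤ 1 := by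
    have : weightedInner π g g = ∑ x, f x ^ 2 * π x - (∑ y, f y * π y) ^ 2 := by
      have h (S : ℝ) (x : D) :
          (f x - S) * (f x - S) * π x = f x ^ 2 * π x - 2 * S * (f x * π x) + S ^ 2 * π x := by
        ring
      simp only [weightedInner, g, h, sum_add_distrib, sum_sub_distrib, ← mul_sum, hπ]
      ring
    nlinarith [sq_nonneg (∑ y, f y * π y)]
  calc ∑ k, weightedInner π g (u k) ^ 2 * c k ≤ ∑ k, weightedInner π g (u k) ^ 2 * C := by
        refine sum_le_sum fun k _ => ?_
        rcases eq_or_ne k k₀ with rfl | hk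
        · simp [hg₀]
        · exact mul_le_mul_of_nonneg_left (hc k hk) (sq_nonneg _)
    _ = C * weightedInner π g g := by
        rw [weightedInner_eq_sum_mul hcard h_ortho, mul_sum]
        exact sum_congr rfl fun k _ => by ring
    _ ≤ C := mul_le_of_le_one_right hC hgg

theorem sum_weightedInner_sub_mean_sq_mul_of_ne
    (h_ortho : ∀ k l, weightedInner π (u k) (u l) = if k = l then 1 else 0)
    {k₀ k₁ : ι} (hu₀ : u k₀ = fun _ => 1) (hk : k₁ ≠ k₀) (c : ι → ℝ) :
    ∑ k, weightedInner π (fun x => u k₁ x - ∑ y, u k₁ y * π y) (u k) ^ 2 * c k = c k₁ := by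
  have hmean : ∑ y, u k₁ y * π y = 0 := by
    simpa [weightedInner, hu₀, hk] using h_ortho k₁ k₀
  simp [hmean, h_ortho]

theorem norm2_le_one_of_weightedInner_self {f : D → ℝ}
    (h : weightedInner π f f = 1) : norm2 π f ≤ 1 := by
  rw [norm2, Real.sqrt_le_one]
  simpa [weightedInner, sq] using h.le

end Variance

theorem stmt_17_general {D : Type*} [Fintype D]
    (π : D → ℝ) (hπsum : ∑ x, π x = 1)
    (P : Matrix D D ℝ)
    (hProw : ∀ x, ∑ y, P x y = 1)
    (hrev : ∀ x y, π x * P x y = π y * P y x)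
    (hcard : 1 < Fintype.card D)
    -- orthonormal eigen-decomposition with eigenvalues in decreasing order,
    -- `β₀ = 1 > β₁ ≥ ... > −1`
    (u : Fin (Fintype.card D) → D → ℝ) (βs : Fin (Fintype.card D) → ℝ)
    (h_eig : ∀ k, P.mulVec (u k) = βs k • u k)
    (h_ortho : ∀ k l, ∑ x, u k x * u l x * π x = if k = l then (1 : ℝ) else 0)
    (h_anti : Antitone βs)
    (h_u0 : ∀ k : Fin (Fintype.card D), (k : ℕ) = 0 → u k = fun _ => 1)
    (h_erg : ∀ k : Fin (Fintype.card D), (k : ℕ) ≠ 0 → |βs k| < 1)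
    (n : ℕ) (hn : 0 < n) :
    -- the worst-case mean squared error over the unit ball of l₂(D,π), for the
    -- chain started in the stationary distribution π
    sSup {e : ℝ | ∃ f : D → ℝ, norm2 π f ≤ 1 ∧
        e = ∑ ω : Fin n → D,
              (π (ω ⟨0, hn⟩) *
                ∏ i : Fin (n - 1),
                  P (ω (Fin.cast (Nat.succ_pred_eq_of_pos hn) i.castSucc))
                    (ω (Fin.cast (Nat.succ_pred_eq_of_pos hn) i.succ))) *
              ((1 / (n : ℝ)) * (∑ i, f (ω i)) - ∑ x, f x * π x) ^ 2}
      = (1 + βs ⟨1, hcard⟩) / ((n : ℝ) * (1 - βs ⟨1, hcard⟩))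
          - 2 * βs ⟨1, hcard⟩ * (1 - βs ⟨1, hcard⟩ ^ n)
              / ((n : ℝ) ^ 2 * (1 - βs ⟨1, hcard⟩) ^ 2)
    ∧ (1 + βs ⟨1, hcard⟩) / ((n : ℝ) * (1 - βs ⟨1, hcard⟩))
          - 2 * βs ⟨1, hcard⟩ * (1 - βs ⟨1, hcard⟩ ^ n)
              / ((n : ℝ) ^ 2 * (1 - βs ⟨1, hcard⟩) ^ 2)
        ≤ 2 / ((n : ℝ) * (1 - βs ⟨1, hcard⟩)) := by
  classical
  obtain ⟨m, rfl⟩ : ∃ m, n = m + 1 := ⟨n - 1, (Nat.succ_pred_eq_of_pos hn).symm⟩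
  set k₁ : Fin (Fintype.card D) := ⟨1, hcard⟩
  set k₀ : Fin (Fintype.card D) := ⟨0, by omega⟩
  have hβ : |βs k₁| < 1 := h_erg k₁ one_ne_zero
  have hβ₁ : βs k₁ ≠ 1 := (abs_lt.1 hβ).2.ne
  have hmse := sum_pathWeight_mul_mean_sub_sq hProw (vecMul_eq_self_of_reversible hProw hrev)
    (Fintype.card_fin _) h_ortho h_eig m
  have hmono : ∀ k ≠ k₀, distPowSum (m + 1) (βs k) ≤ distPowSum (m + 1) (βs k₁) := fun k hk =>
    distPowSum_mono (abs_lt.1 (h_erg k fun h => hk (Fin.ext h))).1.le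
      (h_anti (Fin.mk_le_of_le_val (Nat.pos_of_ne_zero fun h => hk (Fin.ext h)))) _
  refine ⟨Eq.trans (IsGreatest.csSup_eq ⟨⟨u k₁, norm2_le_one_of_weightedInner_self ?_, ?_⟩, ?_⟩)
    (distPowSum_div_sq hβ₁ m.succ_ne_zero), ?_⟩
  · exact (h_ortho k₁ k₁).trans (if_pos rfl)
  · refine ((hmse (u k₁) _).trans ?_).symm
    rw [sum_weightedInner_sub_mean_sq_mul_of_ne h_ortho (h_u0 k₀ rfl) (by simp [k₀, k₁])]
  · rintro _ ⟨f, hf, rfl⟩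
    refine (hmse f _).trans_le (div_le_div_of_nonneg_right ?_ (by positivity))
    exact sum_weightedInner_sub_mean_sq_mul_le hπsum (Fintype.card_fin _) h_ortho (h_u0 k₀ rfl)
      (distPowSum_nonneg (abs_lt.1 hβ).1.le _) hmono (Real.sqrt_le_one.1 hf)
  · rw [← distPowSum_div_sq hβ₁ m.succ_ne_zero]
    calc distPowSum (m + 1) (βs k₁) / ((m + 1 : ℕ) : ℝ) ^ 2
        ≤ 2 * ((m + 1 : ℕ) : ℝ) / (1 - βs k₁) / ((m + 1 : ℕ) : ℝ) ^ 2 := by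
          gcongr; exact distPowSum_le hβ _
      _ = 2 / (((m + 1 : ℕ) : ℝ) * (1 - βs k₁)) := by field_simp

theorem stmt_17 {D : Type*} [Fintype D] [Nonempty D] [DecidableEq D]
    (π : D → ℝ) (hπpos : ∀ x, 0 < π x) (hπsum : ∑ x, π x = 1)
    (P : Matrix D D ℝ) (hPnonneg : ∀ x y, 0 ≤ P x y)
    (hProw : ∀ x, ∑ y, P x y = 1)
    (hrev : ∀ x y, π x * P x y = π y * P y x)
    (hcard : 1 < Fintype.card D)
    -- orthonormal eigen-decomposition with eigenvalues in decreasing order,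
    -- `β₀ = 1 > β₁ ≥ ... > −1`
    (u : Fin (Fintype.card D) → D → ℝ) (βs : Fin (Fintype.card D) → ℝ)
    (h_eig : ∀ k, P.mulVec (u k) = βs k • u k)
    (h_ortho : ∀ k l, ∑ x, u k x * u l x * π x = if k = l then (1 : ℝ) else 0)
    (h_anti : Antitone βs)
    (h_b0 : ∀ k : Fin (Fintype.card D), (k : ℕ) = 0 → βs k = 1)
    (h_u0 : ∀ k : Fin (Fintype.card D), (k : ℕ) = 0 → u k = fun _ => 1)
    (h_erg : ∀ k : Fin (Fintype.card D), (k : ℕ) ≠ 0 → |βs k| < 1)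
    (n : ℕ) (hn : 0 < n) :
    -- the worst-case mean squared error over the unit ball of l₂(D,π), for the
    -- chain started in the stationary distribution π
    sSup {e : ℝ | ∃ f : D → ℝ, norm2 π f ≤ 1 ∧
        e = ∑ ω : Fin n → D,
              (π (ω ⟨0, hn⟩) *
                ∏ i : Fin (n - 1),
                  P (ω (Fin.cast (Nat.succ_pred_eq_of_pos hn) i.castSucc))
                    (ω (Fin.cast (Nat.succ_pred_eq_of_pos hn) i.succ))) *
              ((1 / (n : ℝ)) * (∑ i, f (ω i)) - ∑ x, f x * π x) ^ 2}
      = (1 + βs ⟨1, hcard⟩) / ((n : ℝ) * (1 - βs ⟨1, hcard⟩))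
          - 2 * βs ⟨1, hcard⟩ * (1 - βs ⟨1, hcard⟩ ^ n)
              / ((n : ℝ) ^ 2 * (1 - βs ⟨1, hcard⟩) ^ 2)
    ∧ (1 + βs ⟨1, hcard⟩) / ((n : ℝ) * (1 - βs ⟨1, hcard⟩))
          - 2 * βs ⟨1, hcard⟩ * (1 - βs ⟨1, hcard⟩ ^ n)
              / ((n : ℝ) ^ 2 * (1 - βs ⟨1, hcard⟩) ^ 2)
        ≤ 2 / ((n : ℝ) * (1 - βs ⟨1, hcard⟩)) :=
  stmt_17_general π hπsum P hProw hrev hcard u βs h_eig h_ortho h_anti h_u0 h_erg n hn
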